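/- arXiv:1905.10678 — 4 statements merged into one kernel-verified Lean document; each statement's English description precedes it below -/
import Mathlib

section
/- Let P → Q be a Kummer-type homomorphism of fs monoids, let A be a commutative ring with a monoid homomorphism P → (A, ·). Consider the homomorphisms α : A → A ⊗_{Z[P]} Z[Q] and β₁, β₂ : A ⊗_{Z[P]} Z[Q] → A ⊗_{Z[P]} Z[Q ⊕ (Q^gp/P^gp)], where β₁ sends 1⊗a to 1⊗(a,1) and β₂ sends 1⊗a to 1⊗(a, a mod P^gp) for a ∈ Q. Then the sequence A → A ⊗_{Z[P]} Z[Q] ⇉ A ⊗_{Z[P]} Z[Q ⊕ (Q^gp/P^gp)] is exact, i.e., A is the equalizer of β₁ and β₂. -/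
open TensorProduct

/-- `ι : P →* G` realizes `G` as the group hull (Grothendieck group) `P^gp` of `P`. -/
def IsGp {P G : Type} [CommMonoid P] [CommGroup G] (ι : P →* G) : Prop :=
  (∀ x : G, ∃ a b : P, x = ι a * (ι b)⁻¹) ∧
    (∀ a b : P, ι a = ι b ↔ ∃ c : P, a * c = b * c)

/-- `P` is saturated via `ι : P → P^gp`. -/
def IsSaturatedVia {P G : Type} [CommMonoid P] [CommGroup G] (ι : P →* G) : Prop :=
  Function.Injective ι ∧
    ∀ x : G, (∃ n : ℕ, 1 ≤ n ∧ x ^ n ∈ Set.range ι) → x ∈ Set.range ι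

/-- `P` is fs: finitely generated and saturated. -/
def IsFsVia {P G : Type} [CommMonoid P] [CommGroup G] (ι : P →* G) : Prop :=
  Monoid.FG P ∧ IsSaturatedVia ι

/-- `h : P → Q` is of Kummer type. -/
def IsKummer {P Q : Type} [CommMonoid P] [CommMonoid Q] (h : P →* Q) : Prop :=
  Function.Injective h ∧ ∀ a : Q, ∃ n : ℕ, 1 ≤ n ∧ a ^ n ∈ Set.range h

/-!
Write `C = Q^gp/P^gp`. Since some power of every `q ∈ Q` lies in `P` and `P` is saturated, `q`
lies in `P` exactly when its class in `C` is trivial. Hence dropping the coefficients of `ℤ[Q × C]`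
outside degree `1 ∈ C` gives a `ℤ[P]`-linear map `π : ℤ[Q × C] → ℤ[Q]` with `π ∘ β₁ = id` and
`π ∘ β₂ = ι ∘ τ`, where `τ : ℤ[Q] → ℤ[P]` drops the coefficients outside `P` (again `ℤ[P]`-linear)
and `ι : ℤ[P] → ℤ[Q]`. So an element `y` with `β₁ y = β₂ y` is fixed by `A ⊗ (ι ∘ τ)`, which
factors through `A ⊗ ℤ[P] = A`; and `τ` retracts `ι`, so `A → A ⊗ ℤ[Q]` is injective.
-/

open Function MonoidAlgebra

section Monoids

variable {P Q G G' : Type*} [CommMonoid P] [CommMonoid Q] [CommGroup G] [CommGroup G']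
  {ιP : P →* G} {ιQ : Q →* G'} {h : P →* Q} {g : G →* G'}

theorem injective_of_comp_eq_comp (hgpP : ∀ x : G, ∃ a b : P, x = ιP a * (ιP b)⁻¹)
    (hιQ : Injective ιQ) (hh : Injective h) (hg : g.comp ιP = ιQ.comp h) : Injective g := by
  rw [injective_iff_map_eq_one]
  intro x hx
  obtain ⟨a, b, rfl⟩ := hgpP x
  have hgι : ∀ p, g (ιP p) = ιQ (h p) := DFunLike.congr_fun hg
  rw [map_mul, map_inv, hgι, hgι, mul_inv_eq_one] at hx
  rw [hh (hιQ hx), mul_inv_cancel]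

theorem mk_eq_one_iff_mem_range
    (hsat : ∀ x : G, (∃ n : ℕ, 1 ≤ n ∧ x ^ n ∈ Set.range ιP) → x ∈ Set.range ιP)
    (hιQ : Injective ιQ) (hK : ∀ a : Q, ∃ n : ℕ, 1 ≤ n ∧ a ^ n ∈ Set.range h)
    (hg : g.comp ιP = ιQ.comp h) (hginj : Injective g) (q : Q) :
    (ιQ q : G' ⧸ g.range) = 1 ↔ q ∈ Set.range h := by
  have hgι : ∀ p, g (ιP p) = ιQ (h p) := DFunLike.congr_fun hg
  rw [QuotientGroup.eq_one_iff]
  constructor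
  · rintro ⟨x, hx⟩
    obtain ⟨n, hn, p, hp⟩ := hK q
    have hxn : x ^ n = ιP p := hginj (by rw [map_pow, hx, hgι, hp, map_pow])
    obtain ⟨p', rfl⟩ := hsat x ⟨n, hn, p, hxn.symm⟩
    exact ⟨p', hιQ (by rw [← hgι, hx])⟩
  · rintro ⟨p, rfl⟩
    exact ⟨ιP p, hgι p⟩

end Monoids

theorem MonoidHom.mem_range_of_mul_mem_range {P Q C : Type*} [Monoid P] [Monoid Q] [Monoid C]
    {h : P →* Q} {χ : Q →* C} (hχ : ∀ q, χ q = 1 ↔ q ∈ Set.range h) {p : P} {q : Q}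
    (hpq : h p * q ∈ Set.range h) : q ∈ Set.range h := by
  rwa [← hχ, map_mul, (hχ (h p)).2 ⟨p, rfl⟩, one_mul, hχ] at hpq

theorem MonoidHom.mem_range_inl_of_mul_mem_range {M N : Type*} [Monoid M] [Monoid N] {m : M}
    {x : M × N} (hx : inl M N m * x ∈ Set.range (inl M N)) : x ∈ Set.range (inl M N) := by
  obtain ⟨m', hm'⟩ := hx
  exact ⟨x.1, Prod.ext rfl (by simpa using congrArg Prod.snd hm')⟩

namespace MonoidAlgebra

theorem comapDomain_single_mul {R M N : Type*} [Semiring R] [Monoid M] [Monoid N] {f : M →* N}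
    (hf : Injective f) (hrange : ∀ m n, f m * n ∈ Set.range f → n ∈ Set.range f)
    (m : M) (r : R) (x : R[N]) :
    comapDomain f hf (single (f m) r * x) = single m r * comapDomain f hf x := by
  induction x using induction_linear with
  | zero => simp only [mul_zero, comapDomain_zero]
  | add x y hx hy => simp only [mul_add, comapDomain_add, hx, hy]
  | single n s =>
    rw [single_mul_single]
    by_cases hn : n ∈ Set.range f
    · obtain ⟨m', rfl⟩ := hn
      rw [← map_mul, comapDomain_single_map, comapDomain_single_map, single_mul_single]
    · rw [comapDomain_single_of_not_mem_range hn,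
        comapDomain_single_of_not_mem_range fun h ↦ hn (hrange m n h), mul_zero]

variable {P M N : Type*} [CommMonoid P] [CommMonoid M] [CommMonoid N]
  [Algebra ℤ[P] ℤ[M]] [Algebra ℤ[P] ℤ[N]]

noncomputable def comapDomainLinearMap (k : P →* M)
    (hk : ∀ p, algebraMap ℤ[P] ℤ[M] (single p 1) = single (k p) 1)
    (f : M →* N) (hf : Injective f) (hrange : ∀ m n, f m * n ∈ Set.range f → n ∈ Set.range f)
    (hfk : ∀ p, algebraMap ℤ[P] ℤ[N] (single p 1) = single (f (k p)) 1) :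
    ℤ[N] →ₗ[ℤ[P]] ℤ[M] :=
  equivariantOfLinearOfComm (comapDomainAddMonoidHom f hf).toIntLinearMap fun p x ↦ by
    simp only [AddMonoidHom.coe_toIntLinearMap, comapDomainAddMonoidHom_apply, Algebra.smul_def,
      hk, hfk, comapDomain_single_mul hf hrange]

theorem comapDomainLinearMap_apply (k : P →* M) (hk) (f : M →* N) (hf) (hrange) (hfk) (x : ℤ[N]) :
    comapDomainLinearMap k hk f hf hrange hfk x = comapDomain f hf x := rfl

theorem comapDomain_inl_single_eq_algebraMap {C : Type*} [Monoid C] {h : P →* M}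
    (hh : Injective h) (hPM : ∀ p, algebraMap ℤ[P] ℤ[M] (single p 1) = single (h p) 1)
    {χ : M → C} (hχ : ∀ m, χ m = 1 ↔ m ∈ Set.range h) (hinl : Injective (MonoidHom.inl M C))
    (m : M) :
    comapDomain (MonoidHom.inl M C) hinl (single (m, χ m) 1) =
      algebraMap ℤ[P] ℤ[M] (comapDomain h hh (single m 1)) := by
  by_cases hm : m ∈ Set.range h
  · obtain ⟨p, rfl⟩ := hm
    rw [(hχ (h p)).2 ⟨p, rfl⟩, comapDomain_single_map, hPM]
    exact comapDomain_single_map (MonoidHom.inl M C) hinl (h p) 1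
  · rw [comapDomain_single_of_not_mem_range hm, map_zero, comapDomain_single_of_not_mem_range]
    rintro ⟨m', hm'⟩
    exact mt (hχ m).1 hm (congrArg Prod.snd hm').symm

end MonoidAlgebra

namespace TensorProduct

section Retraction

variable {R A B : Type*} [CommSemiring R] [AddCommMonoid A] [Module R A] [Semiring B] [Algebra R B]

theorem lTensor_algebraMap_comp_apply (τ : B →ₗ[R] R) (y : A ⊗[R] B) :
    (Algebra.linearMap R B ∘ₗ τ).lTensor A y = TensorProduct.rid R A (τ.lTensor A y) ⊗ₜ 1 := by
  induction y using TensorProduct.induction_on with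
  | zero => simp only [map_zero, zero_tmul]
  | tmul a b => simp [Algebra.algebraMap_eq_smul_one, smul_tmul']
  | add y z hy hz => simp only [map_add, hy, hz, add_tmul]

theorem tmul_one_injective_of_retraction (τ : B →ₗ[R] R) (hτ : τ 1 = 1) :
    Injective (fun a : A ↦ a ⊗ₜ[R] (1 : B)) :=
  LeftInverse.injective (g := fun y ↦ TensorProduct.rid R A (τ.lTensor A y)) fun a ↦ by simp [hτ]

theorem exists_tmul_one_eq_of_lTensor_eq (τ : B →ₗ[R] R) {y : A ⊗[R] B}
    (hy : (Algebra.linearMap R B ∘ₗ τ).lTensor A y = y) : ∃ a : A, a ⊗ₜ 1 = y :=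
  ⟨_, (lTensor_algebraMap_comp_apply τ y).symm.trans hy⟩

end Retraction

theorem induction_on_tmul_single {R A Q : Type*} [CommSemiring R] [AddCommGroup A] [Module R A]
    [Monoid Q] [Module R ℤ[Q]] {motive : A ⊗[R] ℤ[Q] → Prop}
    (y : A ⊗[R] ℤ[Q]) (add : ∀ y z, motive y → motive z → motive (y + z))
    (tmul_single : ∀ a q, motive (a ⊗ₜ single q 1)) : motive y := by
  induction y using TensorProduct.induction_on with
  | zero => simpa using tmul_single 0 1
  | add y z hy hz => exact add y z hy hz
  | tmul a x =>
    induction x using MonoidAlgebra.induction_linear with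
    | zero => simpa using tmul_single 0 1
    | add x x' hx hx' => simpa [tmul_add] using add _ _ hx hx'
    | single q n =>
      rw [← mul_one n, ← smul_eq_mul, ← smul_single, ← smul_tmul]
      exact tmul_single _ q

theorem _root_.RingHom.map_tmul_of_map_tmul_one {R A B D : Type*} [CommSemiring R] [Semiring A]
    [Algebra R A] [Semiring B] [Algebra R B] [Semiring D] [Algebra R D]
    (β : A ⊗[R] B →+* A ⊗[R] D) (hβ : ∀ a, β (a ⊗ₜ 1) = a ⊗ₜ 1) {b : B} {d : D}
    (hb : β (1 ⊗ₜ b) = 1 ⊗ₜ d) (a : A) : β (a ⊗ₜ b) = a ⊗ₜ d := by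
  have hab : a ⊗ₜ[R] b = (a ⊗ₜ 1) * (1 ⊗ₜ b) := by
    rw [Algebra.TensorProduct.tmul_mul_tmul, mul_one, one_mul]
  rw [hab, map_mul, hβ, hb, Algebra.TensorProduct.tmul_mul_tmul, mul_one, one_mul]

theorem lTensor_ringHom_apply_eq {R A Q D : Type*} [CommSemiring R] [Ring A] [Algebra R A]
    [Monoid Q] [Algebra R ℤ[Q]] [Semiring D] [Algebra R D] (β : A ⊗[R] ℤ[Q] →+* A ⊗[R] D)
    (hβ : ∀ a, β (a ⊗ₜ 1) = a ⊗ₜ 1) {e : Q → D} (hβe : ∀ q, β (1 ⊗ₜ single q 1) = 1 ⊗ₜ e q)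
    (π : D →ₗ[R] ℤ[Q]) (φ : ℤ[Q] →ₗ[R] ℤ[Q])
    (hπe : ∀ q, π (e q) = φ (single q 1)) (y : A ⊗[R] ℤ[Q]) :
    π.lTensor A (β y) = φ.lTensor A y := by
  induction y using induction_on_tmul_single with
  | add y z hy hz => rw [map_add, map_add, map_add, hy, hz]
  | tmul_single a q =>
    rw [β.map_tmul_of_map_tmul_one hβ (hβe q), LinearMap.lTensor_tmul, LinearMap.lTensor_tmul,
      hπe]

end TensorProduct

theorem stmt_4_general (P Q G G' : Type) [CommMonoid P] [CommMonoid Q] [CommGroup G] [CommGroup G']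
    (ιP : P →* G) (ιQ : Q →* G') (hgpP : IsGp ιP)
    (hP : IsFsVia ιP) (hQ : IsFsVia ιQ)
    (h : P →* Q) (hK : IsKummer h)
    (g : G →* G') (hg : g.comp ιP = ιQ.comp h)
    (A : Type) [CommRing A]
    [Algebra (MonoidAlgebra ℤ P) A]
    [Algebra (MonoidAlgebra ℤ P) (MonoidAlgebra ℤ Q)]
    (hPQ : ∀ p : P, algebraMap (MonoidAlgebra ℤ P) (MonoidAlgebra ℤ Q)
      (MonoidAlgebra.single p 1) = MonoidAlgebra.single (h p) 1)
    [Algebra (MonoidAlgebra ℤ P) (MonoidAlgebra ℤ (Q × (G' ⧸ g.range)))]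
    (hPQC : ∀ p : P, algebraMap (MonoidAlgebra ℤ P) (MonoidAlgebra ℤ (Q × (G' ⧸ g.range)))
      (MonoidAlgebra.single p 1) = MonoidAlgebra.single (h p, 1) 1)
    (β₁ β₂ : (A ⊗[MonoidAlgebra ℤ P] MonoidAlgebra ℤ Q) →+*
      (A ⊗[MonoidAlgebra ℤ P] MonoidAlgebra ℤ (Q × (G' ⧸ g.range))))
    (hβ : ∀ x : A, β₁ (x ⊗ₜ 1) = x ⊗ₜ 1 ∧ β₂ (x ⊗ₜ 1) = x ⊗ₜ 1)
    (hβ₁ : ∀ a : Q, β₁ (1 ⊗ₜ MonoidAlgebra.single a 1) =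
      1 ⊗ₜ MonoidAlgebra.single (a, (1 : G' ⧸ g.range)) 1)
    (hβ₂ : ∀ a : Q, β₂ (1 ⊗ₜ MonoidAlgebra.single a 1) =
      1 ⊗ₜ MonoidAlgebra.single (a, (QuotientGroup.mk (ιQ a) : G' ⧸ g.range)) 1) :
    Function.Injective
      (fun x : A => (x ⊗ₜ 1 : A ⊗[MonoidAlgebra ℤ P] MonoidAlgebra ℤ Q)) ∧
    Set.range (fun x : A => (x ⊗ₜ 1 : A ⊗[MonoidAlgebra ℤ P] MonoidAlgebra ℤ Q)) =
      {y | β₁ y = β₂ y} := by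
  obtain ⟨hh, hKum⟩ := hK
  set C := G' ⧸ g.range
  have hmk : ∀ q, (ιQ q : C) = 1 ↔ q ∈ Set.range h :=
    mk_eq_one_iff_mem_range hP.2.2 hQ.2.1 hKum hg (injective_of_comp_eq_comp hgpP.1 hQ.2.1 hh hg)
  have hinl : Injective (MonoidHom.inl Q C) := Prod.mk_left_injective 1
  -- `τ` keeps the part of `ℤ[Q]` supported on `P`, `π` the part of `ℤ[Q × C]` in degree `1 ∈ C`.
  let τ := comapDomainLinearMap (MonoidHom.id P) (fun _ ↦ rfl) h hh
    (fun _ _ ↦ MonoidHom.mem_range_of_mul_mem_range (χ := (QuotientGroup.mk' _).comp ιQ) hmk) hPQ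
  let π := comapDomainLinearMap h hPQ (MonoidHom.inl Q C) hinl
    (fun _ _ ↦ MonoidHom.mem_range_inl_of_mul_mem_range) hPQC
  have hπβ₁ := lTensor_ringHom_apply_eq β₁ (fun a ↦ (hβ a).1) hβ₁ π LinearMap.id
    fun q ↦ comapDomain_single_map (MonoidHom.inl Q C) hinl q 1
  have hπβ₂ := lTensor_ringHom_apply_eq β₂ (fun a ↦ (hβ a).2) hβ₂ π
    (Algebra.linearMap _ _ ∘ₗ τ) (comapDomain_inl_single_eq_algebraMap hh hPQ hmk hinl)
  refine ⟨tmul_one_injective_of_retraction τ ?_, Set.ext fun y ↦ ⟨?_, fun hy ↦ ?_⟩⟩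
  · simpa [τ, comapDomainLinearMap_apply, one_def] using comapDomain_single_map h hh 1 (1 : ℤ)
  · rintro ⟨x, rfl⟩
    exact (hβ x).1.trans (hβ x).2.symm
  · refine exists_tmul_one_eq_of_lTensor_eq τ ?_
    rw [← hπβ₂, ← Set.mem_ofPred_eq.mp hy, hπβ₁, LinearMap.lTensor_id_apply]

/-- Let `P → Q` be a Kummer-type homomorphism of fs monoids and `A` a commutative ring with a
monoid homomorphism `P → (A, ·)`.  Put `C = Q^gp/P^gp` (the cokernel of `P^gp → Q^gp`).
Consider `α : A → A ⊗_{Z[P]} Z[Q]`, `a ↦ a ⊗ 1`, and the homomorphisms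
`β₁, β₂ : A ⊗_{Z[P]} Z[Q] → A ⊗_{Z[P]} Z[Q ⊕ C]` with `β₁(1 ⊗ a) = 1 ⊗ (a, 1)` and
`β₂(1 ⊗ a) = 1 ⊗ (a, a mod P^gp)` for `a ∈ Q`.  Then
`A → A ⊗_{Z[P]} Z[Q] ⇉ A ⊗_{Z[P]} Z[Q ⊕ C]` is exact: `α` is injective and its image is the
equalizer of `β₁` and `β₂`. -/
theorem stmt_4 (P Q G G' : Type) [CommMonoid P] [CommMonoid Q] [CommGroup G] [CommGroup G']
    (ιP : P →* G) (ιQ : Q →* G') (hgpP : IsGp ιP) (hgpQ : IsGp ιQ)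
    (hP : IsFsVia ιP) (hQ : IsFsVia ιQ)
    (h : P →* Q) (hK : IsKummer h)
    (g : G →* G') (hg : g.comp ιP = ιQ.comp h)
    (A : Type) [CommRing A] (φ : P →* A)
    [Algebra (MonoidAlgebra ℤ P) A]
    (hA : ∀ p : P, algebraMap (MonoidAlgebra ℤ P) A (MonoidAlgebra.single p 1) = φ p)
    [Algebra (MonoidAlgebra ℤ P) (MonoidAlgebra ℤ Q)]
    (hPQ : ∀ p : P, algebraMap (MonoidAlgebra ℤ P) (MonoidAlgebra ℤ Q)
      (MonoidAlgebra.single p 1) = MonoidAlgebra.single (h p) 1)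
    [Algebra (MonoidAlgebra ℤ P) (MonoidAlgebra ℤ (Q × (G' ⧸ g.range)))]
    (hPQC : ∀ p : P, algebraMap (MonoidAlgebra ℤ P) (MonoidAlgebra ℤ (Q × (G' ⧸ g.range)))
      (MonoidAlgebra.single p 1) = MonoidAlgebra.single (h p, 1) 1)
    (β₁ β₂ : (A ⊗[MonoidAlgebra ℤ P] MonoidAlgebra ℤ Q) →+*
      (A ⊗[MonoidAlgebra ℤ P] MonoidAlgebra ℤ (Q × (G' ⧸ g.range))))
    (hβ : ∀ x : A, β₁ (x ⊗ₜ 1) = x ⊗ₜ 1 ∧ β₂ (x ⊗ₜ 1) = x ⊗ₜ 1)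
    (hβ₁ : ∀ a : Q, β₁ (1 ⊗ₜ MonoidAlgebra.single a 1) =
      1 ⊗ₜ MonoidAlgebra.single (a, (1 : G' ⧸ g.range)) 1)
    (hβ₂ : ∀ a : Q, β₂ (1 ⊗ₜ MonoidAlgebra.single a 1) =
      1 ⊗ₜ MonoidAlgebra.single (a, (QuotientGroup.mk (ιQ a) : G' ⧸ g.range)) 1) :
    Function.Injective
      (fun x : A => (x ⊗ₜ 1 : A ⊗[MonoidAlgebra ℤ P] MonoidAlgebra ℤ Q)) ∧
    Set.range (fun x : A => (x ⊗ₜ 1 : A ⊗[MonoidAlgebra ℤ P] MonoidAlgebra ℤ Q)) =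
      {y | β₁ y = β₂ y} :=
  stmt_4_general P Q G G' ιP ιQ hgpP hP hQ h hK g hg A hPQ hPQC β₁ β₂ hβ hβ₁ hβ₂
end

section
/- Let k be a field, P' ⊂ Q' an inclusion of fs monoids arising as follows: Q' is the pushout in fs monoids of P' ← P → Q where P → P' and P → Q are homomorphisms of fs monoids with P → Q of Kummer type (over an algebraically closed field situation). Let Δ be the torsion subgroup of (Q')^gp. Then Δ ⊆ Q', and for every a ∈ Q' \ Δ there exists n ≥ 1 such that a^n lies in the image of P' \ {1}. -/
theorem IsSaturatedVia.mem_range_of_pow_eq_one {P G : Type} [CommMonoid P] [CommGroup G]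
    {ι : P →* G} (hsat : IsSaturatedVia ι) {x : G} {n : ℕ} (hn : 1 ≤ n) (hx : x ^ n = 1) :
    x ∈ Set.range ι :=
  hsat.2 x ⟨n, hn, hx ▸ ⟨1, map_one ι⟩⟩

/-- A power `q ^ m = h p` turns `(i p' * j q) ^ m` into `i (p' ^ m * f p)`. -/
theorem exists_pow_mem_range_of_pushout {P P' Q Q' : Type}
    [CommMonoid P] [CommMonoid P'] [CommMonoid Q] [CommMonoid Q']
    {h : P →* Q} {f : P →* P'} {i : P' →* Q'} {j : Q →* Q'} (hcomm : i.comp f = j.comp h)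
    (hK : ∀ q : Q, ∃ m : ℕ, 1 ≤ m ∧ q ^ m ∈ Set.range h)
    (hgen : ∀ a : Q', ∃ n : ℕ, 1 ≤ n ∧ ∃ (p' : P') (q : Q), a ^ n = i p' * j q) (a : Q') :
    ∃ n : ℕ, 1 ≤ n ∧ ∃ p' : P', a ^ n = i p' := by
  obtain ⟨n, hn, p', q, hpq⟩ := hgen a
  obtain ⟨m, hm, p, hp⟩ := hK q
  have hij : i (f p) = j (h p) := DFunLike.congr_fun hcomm p
  refine ⟨n * m, Nat.mul_pos hn hm, p' ^ m * f p, ?_⟩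
  rw [pow_mul, hpq, mul_pow, map_mul, map_pow, ← map_pow j, ← hp, ← hij]

theorem stmt_9_general (P P' Q Q' G'' : Type)
    [CommMonoid P] [CommMonoid P'] [CommMonoid Q] [CommMonoid Q'] [CommGroup G'']
    (ι'' : Q' →* G'')
    (hQ' : IsFsVia ι'')
    (h : P →* Q) (hK : IsKummer h) (f : P →* P')
    (i : P' →* Q') (j : Q →* Q') (hcomm : i.comp f = j.comp h)
    (hgen : ∀ a : Q', ∃ n : ℕ, 1 ≤ n ∧ ∃ (p' : P') (q : Q), a ^ n = i p' * j q) :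
    (∀ x : G'', (∃ n : ℕ, 1 ≤ n ∧ x ^ n = 1) → x ∈ Set.range ι'') ∧
    (∀ a : Q', (¬ ∃ n : ℕ, 1 ≤ n ∧ (ι'' a) ^ n = 1) →
      ∃ n : ℕ, 1 ≤ n ∧ a ^ n ∈ i '' {p' : P' | p' ≠ 1}) := by
  refine ⟨fun x ⟨n, hn, hx⟩ => hQ'.2.mem_range_of_pow_eq_one hn hx, fun a ha => ?_⟩
  obtain ⟨n, hn, p', hp'⟩ := exists_pow_mem_range_of_pushout hcomm hK.2 hgen a
  refine ⟨n, hn, p', fun hone => ha ⟨n, hn, ?_⟩, hp'.symm⟩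
  rw [← map_pow, hp', hone, map_one, map_one]

/-- Let `P, P', Q` be fs monoids, `h : P → Q` of Kummer type, `f : P → P'`, and let `Q'` be the
fs pushout of `P' ← P → Q`: an fs monoid with maps `i : P' → Q'`, `j : Q → Q'` satisfying
`i ∘ f = j ∘ h`, such that every element of `Q'` has a positive power of the form
`i(p')·j(q)` (`Q'` is the saturation of the image of `P' ⊕_P Q`).  Let `Δ` denote the torsion
subgroup of `(Q')^gp`.  Then `Δ ⊆ Q'` (every torsion element of `(Q')^gp` comes from `Q'`),
and for every `a ∈ Q'` whose image in `(Q')^gp` is not in `Δ`, there exists `n ≥ 1` such that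
`a^n` lies in the image of `P' \ {1}`. -/
theorem stmt_9 (P P' Q Q' G'' : Type)
    [CommMonoid P] [CommMonoid P'] [CommMonoid Q] [CommMonoid Q'] [CommGroup G'']
    (GP GP' GQ : Type) [CommGroup GP] [CommGroup GP'] [CommGroup GQ]
    (ιP : P →* GP) (ιP' : P' →* GP') (ιQ : Q →* GQ) (ι'' : Q' →* G'')
    (hgpP : IsGp ιP) (hgpP' : IsGp ιP') (hgpQ : IsGp ιQ) (hgp'' : IsGp ι'')
    (hP : IsFsVia ιP) (hP' : IsFsVia ιP') (hQfs : IsFsVia ιQ) (hQ' : IsFsVia ι'')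
    (h : P →* Q) (hK : IsKummer h) (f : P →* P')
    (i : P' →* Q') (j : Q →* Q') (hcomm : i.comp f = j.comp h)
    (hgen : ∀ a : Q', ∃ n : ℕ, 1 ≤ n ∧ ∃ (p' : P') (q : Q), a ^ n = i p' * j q) :
    (∀ x : G'', (∃ n : ℕ, 1 ≤ n ∧ x ^ n = 1) → x ∈ Set.range ι'') ∧
    (∀ a : Q', (¬ ∃ n : ℕ, 1 ≤ n ∧ (ι'' a) ^ n = 1) →
      ∃ n : ℕ, 1 ≤ n ∧ a ^ n ∈ i '' {p' : P' | p' ≠ 1}) :=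
  stmt_9_general P P' Q Q' G'' ι'' hQ' h hK f i j hcomm hgen
end

section
/- Let P → Q be a Kummer-type homomorphism of fs monoids and let G = Spec(Z[Q^gp/P^gp]) be the diagonalizable group scheme on the finite abelian group Q^gp/P^gp. Then for any ring A with P → A, the map A ⊗_{Z[P]} Z[Q] → A ⊗_{Z[P]} Z[Q] ⊗_Z Z[Q^gp/P^gp] given by 1⊗a ↦ 1⊗a⊗(a mod P^gp), together with the inclusion, realizes G × X ≅ X ×_Y X where the fiber product of monoid algebras is taken through the saturated pushout Q ⊕_P Q followed by saturation; concretely, the saturation of the pushout of Q ← P → Q in integral monoids is isomorphic to Q ⊕ (Q^gp/P^gp) via (a, b) ↦ (ab, b mod P^gp). -/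
/-! The Kummer condition gives every element of `Q^gp` a positive power in the image of `P^gp`,
so `C = Q^gp/P^gp` is a finitely generated torsion abelian group, hence finite. Then
`(q, c)^|C| = (q^|C|, 1)` lies in the image of `(a, b) ↦ (ab, b̄)`, and on group hulls this map
is surjective with kernel exactly the antidiagonal copy `{(x, x⁻¹)}` of `P^gp`. -/

theorem Group.fg_of_monoidFG_of_forall_eq_mul_inv {M G : Type*} [Monoid M] [Group G]
    [hM : Monoid.FG M] (ι : M →* G) (hι : ∀ x : G, ∃ a b : M, x = ι a * (ι b)⁻¹) :
    Group.FG G := by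
  classical
  obtain ⟨S, hS⟩ := hM.fg_top
  refine ⟨⟨S.image ι, eq_top_iff.2 fun x _ => ?_⟩⟩
  have hrange : ∀ a : M, ι a ∈ Subgroup.closure (↑(S.image ι) : Set G) := by
    intro a
    have ha : ι a ∈ Submonoid.closure (ι '' S) := by
      rw [← MonoidHom.map_mclosure, hS]
      exact ⟨a, trivial, rfl⟩
    rw [Finset.coe_image]
    exact Submonoid.closure_le.2 Subgroup.subset_closure ha
  obtain ⟨a, b, rfl⟩ := hι x
  exact mul_mem (hrange a) (inv_mem (hrange b))

section Kummer

variable {P Q G G' : Type} [CommMonoid P] [CommMonoid Q] [CommGroup G] [CommGroup G']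
  {ιP : P →* G} {ιQ : Q →* G'} {h : P →* Q} {g : G →* G'}

theorem isMulTorsion_quotient_range_of_isKummer (hgpQ : IsGp ιQ) (hK : IsKummer h)
    (hg : g.comp ιP = ιQ.comp h) : IsMulTorsion (G' ⧸ g.range) := by
  have hQ : ∀ a : Q, IsOfFinOrder (QuotientGroup.mk (ιQ a) : G' ⧸ g.range) := by
    intro a
    obtain ⟨n, hn, p, hp⟩ := hK.2 a
    refine isOfFinOrder_iff_pow_eq_one.2 ⟨n, hn, ?_⟩
    rw [← QuotientGroup.mk_pow, QuotientGroup.eq_one_iff, ← map_pow, ← hp]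
    exact ⟨ιP p, DFunLike.congr_fun hg p⟩
  intro c
  obtain ⟨x, rfl⟩ := QuotientGroup.mk_surjective c
  obtain ⟨a, b, rfl⟩ := hgpQ.1 x
  rw [QuotientGroup.mk_mul, QuotientGroup.mk_inv]
  exact (hQ a).mul (hQ b).inv

theorem finite_quotient_range_of_isKummer (hQ : Monoid.FG Q) (hgpQ : IsGp ιQ) (hK : IsKummer h)
    (hg : g.comp ιP = ιQ.comp h) : Finite (G' ⧸ g.range) :=
  have : Group.FG G' := Group.fg_of_monoidFG_of_forall_eq_mul_inv ιQ hgpQ.1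
  have : Group.FG (G' ⧸ g.range) := Group.fg_of_surjective (QuotientGroup.mk'_surjective g.range)
  CommGroup.finite_of_fg_isMulTorsion _ (isMulTorsion_quotient_range_of_isKummer hgpQ hK hg)

end Kummer

namespace MonoidHom

variable {M N : Type*} [CommMonoid M] [Monoid N]

/-- For `f : Q → Q^gp/P^gp` this is the comparison map `Q ⊕_P Q → Q ⊕ Q^gp/P^gp`. -/
def mulProdSnd (f : M →* N) : M × M →* M × N :=
  (fst M M * snd M M).prod (f.comp (snd M M))

@[simp]
theorem mulProdSnd_apply (f : M →* N) (a b : M) : f.mulProdSnd (a, b) = (a * b, f b) :=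
  rfl

theorem exists_pow_mem_range_mulProdSnd {C : Type*} [Group C] [Finite C] (f : M →* C)
    (y : M × C) : ∃ n : ℕ, 1 ≤ n ∧ y ^ n ∈ Set.range f.mulProdSnd :=
  ⟨Nat.card C, Nat.card_pos, (y.1 ^ Nat.card C, 1), by
    simp [Prod.ext_iff, pow_card_eq_one']⟩

end MonoidHom

section Pushout

open MonoidHom

variable {G G' : Type*} [Group G] [CommGroup G'] (g : G →* G')

theorem ker_mulProdSnd_mk'_range :
    (QuotientGroup.mk' g.range).mulProdSnd.ker = (g.prod g⁻¹).range := by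
  ext ⟨x, y⟩
  rw [mem_ker, mulProdSnd_apply, Prod.mk_eq_one, QuotientGroup.mk'_apply,
    QuotientGroup.eq_one_iff]
  simp only [mem_range, prod_apply, inv_apply, Prod.ext_iff]
  constructor
  · rintro ⟨hxy, p, rfl⟩
    exact ⟨p⁻¹, by rw [map_inv, eq_inv_of_mul_eq_one_left hxy], by rw [map_inv, inv_inv]⟩
  · rintro ⟨p, rfl, rfl⟩
    exact ⟨mul_inv_cancel _, p⁻¹, map_inv g p⟩

theorem surjective_mulProdSnd_mk' (H : Subgroup G') :
    Function.Surjective (QuotientGroup.mk' H).mulProdSnd := by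
  rintro ⟨z, c⟩
  obtain ⟨y, rfl⟩ := QuotientGroup.mk'_surjective H c
  exact ⟨(z * y⁻¹, y), by simp⟩

noncomputable def pushoutEquivProdQuotient :
    (G' × G') ⧸ (g.prod g⁻¹).range ≃* G' × (G' ⧸ g.range) :=
  (QuotientGroup.quotientMulEquivOfEq (ker_mulProdSnd_mk'_range g).symm).trans
    (QuotientGroup.quotientKerEquivOfSurjective _ (surjective_mulProdSnd_mk' g.range))

theorem pushoutEquivProdQuotient_mk (x y : G') :
    pushoutEquivProdQuotient g (QuotientGroup.mk (x, y)) = (x * y, QuotientGroup.mk y) :=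
  rfl

end Pushout

theorem stmt_11_general (P Q G G' : Type) [CommMonoid P] [CommMonoid Q] [CommGroup G] [CommGroup G']
    (ιP : P →* G) (ιQ : Q →* G') (hgpQ : IsGp ιQ)
    (hQ : IsFsVia ιQ)
    (h : P →* Q) (hK : IsKummer h)
    (g : G →* G') (hg : g.comp ιP = ιQ.comp h) :
    Finite (G' ⧸ g.range) ∧
    (∃ ψ : Q × Q →* Q × (G' ⧸ g.range),
      ∀ a b : Q, ψ (a, b) = (a * b, (QuotientGroup.mk (ιQ b) : G' ⧸ g.range))) ∧
    (∀ y : Q × (G' ⧸ g.range), ∃ n : ℕ, 1 ≤ n ∧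
      y ^ n ∈ Set.range (fun ab : Q × Q =>
        ((ab.1 * ab.2, (QuotientGroup.mk (ιQ ab.2) : G' ⧸ g.range)) :
          Q × (G' ⧸ g.range)))) ∧
    (∃ e : ((G' × G') ⧸ (MonoidHom.prod g g⁻¹).range) ≃* (G' × (G' ⧸ g.range)),
      ∀ x y : G', e (QuotientGroup.mk (x, y)) =
        (x * y, (QuotientGroup.mk y : G' ⧸ g.range))) := by
  have hfin := finite_quotient_range_of_isKummer hQ.1 hgpQ hK hg
  let toQuotient : Q →* G' ⧸ g.range := (QuotientGroup.mk' g.range).comp ιQ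
  exact ⟨hfin, ⟨toQuotient.mulProdSnd, fun _ _ => rfl⟩,
    toQuotient.exists_pow_mem_range_mulProdSnd,
    ⟨pushoutEquivProdQuotient g, pushoutEquivProdQuotient_mk g⟩⟩

/-- Let `P → Q` be a Kummer-type homomorphism of fs monoids, `g : P^gp → Q^gp` the induced map
and `C = Q^gp/P^gp` (a finite abelian group).  The saturated pushout of `Q ← P → Q` is
isomorphic to `Q ⊕ C` via `(a, b) ↦ (ab, b mod P^gp)`.  Concretely:
(a) the finiteness of `C`; (b) the map `Q × Q → Q × C`, `(a,b) ↦ (ab, b̄)`, is a monoid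
homomorphism; (c) `Q × C` is saturated over its image: every element of `Q × C` has a positive
power in the image; and (d) at the level of group hulls, the pushout
`(Q^gp × Q^gp)/P^gp` (quotient by the antidiagonal copy `x ↦ (g x, (g x)⁻¹)` of `P^gp`) is
isomorphic to `Q^gp × C` via `(x, y) ↦ (xy, ȳ)`. -/
theorem stmt_11 (P Q G G' : Type) [CommMonoid P] [CommMonoid Q] [CommGroup G] [CommGroup G']
    (ιP : P →* G) (ιQ : Q →* G') (hgpP : IsGp ιP) (hgpQ : IsGp ιQ)
    (hP : IsFsVia ιP) (hQ : IsFsVia ιQ)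
    (h : P →* Q) (hK : IsKummer h)
    (g : G →* G') (hg : g.comp ιP = ιQ.comp h) :
    Finite (G' ⧸ g.range) ∧
    (∃ ψ : Q × Q →* Q × (G' ⧸ g.range),
      ∀ a b : Q, ψ (a, b) = (a * b, (QuotientGroup.mk (ιQ b) : G' ⧸ g.range))) ∧
    (∀ y : Q × (G' ⧸ g.range), ∃ n : ℕ, 1 ≤ n ∧
      y ^ n ∈ Set.range (fun ab : Q × Q =>
        ((ab.1 * ab.2, (QuotientGroup.mk (ιQ ab.2) : G' ⧸ g.range)) :
          Q × (G' ⧸ g.range)))) ∧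
    (∃ e : ((G' × G') ⧸ (MonoidHom.prod g g⁻¹).range) ≃* (G' × (G' ⧸ g.range)),
      ∀ x y : G', e (QuotientGroup.mk (x, y)) =
        (x * y, (QuotientGroup.mk y : G' ⧸ g.range))) :=
  stmt_11_general P Q G G' ιP ιQ hgpQ hQ h hK g hg
end

section
/- Let A be a local ring, P an fs monoid with a map P → A, P → Q an injective Kummer-type homomorphism of fs monoids with Q torsion-free. Let I ⊂ A be the ideal generated by the image of P \ {1}, and let I' ⊂ A' := A ⊗_{Z[P]} Z[Q] be the ideal generated by the image of Q \ {1}. Then the natural map A/I → A'/I' is an isomorphism. -/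
/-! Every `q ≠ 1` vanishes in `A'/I'` and `ℤ[Q]` is spanned by the `q`, so `A → A'/I'` is onto.
For the kernel one may assume `I ≠ A`. Then `P` has no units other than `1`, and neither has `Q`:
a unit `u` has a power `h p`, where `p` is a unit because `u⁻¹` too has a power in `P`; so `u` is
torsion, hence `1`. Thus `q ↦ [q = 1]` is a character `Q → A/I` extending `P → A → A/I`, and
together with `A → A/I` it induces `A' → A/I`, which kills `I'` and so splits `A/I → A'/I'`. -/

open TensorProduct

def Ideal.spanNeOne {M R : Type*} [One M] [Semiring R] (f : M → R) : Ideal R :=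
  Ideal.span (f '' {m | m ≠ 1})

namespace Ideal

theorem apply_mem_spanNeOne {M R : Type*} [One M] [Semiring R] (f : M → R) {m : M} (hm : m ≠ 1) :
    f m ∈ spanNeOne f :=
  subset_span ⟨m, hm, rfl⟩

theorem subsingleton_units_of_one_notMem_spanNeOne {M R : Type*} [CommMonoid M] [CommSemiring R]
    (f : M →* R) (h1 : (1 : R) ∉ spanNeOne f) : Subsingleton Mˣ := by
  have hu : ∀ u : Mˣ, u = 1 := fun u ↦ by
    by_contra hu
    have hmem : f u ∈ spanNeOne f := apply_mem_spanNeOne f (mt Units.val_eq_one.1 hu)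
    exact h1 ((eq_top_iff_one _).1 (eq_top_of_isUnit_mem _ hmem (u.isUnit.map f)))
  exact subsingleton_of_forall_eq 1 hu

end Ideal

namespace IsKummer

variable {P Q : Type} [CommMonoid P] [CommMonoid Q] {h : P →* Q}

theorem isUnit_of_isUnit_apply (hK : IsKummer h) {p : P} (hp : IsUnit (h p)) : IsUnit p := by
  obtain ⟨u, hu⟩ := hp
  obtain ⟨m, hm, p', hp'⟩ := hK.2 ↑u⁻¹
  have hpm : p ^ m * p' = 1 := hK.1 <| by
    rw [map_mul, map_pow, ← hu, hp', ← Units.val_pow_eq_pow_val, ← Units.val_pow_eq_pow_val,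
      ← Units.val_mul, ← mul_pow, mul_inv_cancel, one_pow, Units.val_one, map_one]
  exact (isUnit_pow_iff (Nat.one_le_iff_ne_zero.1 hm)).1 (.of_mul_eq_one _ hpm)

theorem subsingleton_units (hK : IsKummer h) (htf : ∀ q : Q, ∀ n : ℕ, 1 ≤ n → q ^ n = 1 → q = 1)
    [Subsingleton Pˣ] : Subsingleton Qˣ := by
  have hu : ∀ u : Qˣ, u = 1 := fun u ↦ by
    obtain ⟨n, hn, p, hp⟩ := hK.2 u
    have hp1 : p = 1 := isUnit_iff_eq_one.1 (hK.isUnit_of_isUnit_apply (hp ▸ u.isUnit.pow n))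
    exact Units.val_eq_one.1 (htf _ n hn (by rw [← hp, hp1, map_one]))
  exact subsingleton_of_forall_eq 1 hu

end IsKummer

def MonoidHom.indicatorOne (M M₀ : Type*) [CommMonoid M] [Subsingleton Mˣ] [DecidableEq M]
    [MonoidWithZero M₀] : M →* M₀ where
  toFun m := if m = 1 then 1 else 0
  map_one' := if_pos rfl
  map_mul' a b := by simp only [mul_eq_one]; split_ifs <;> simp_all

section TensorProduct

open MonoidAlgebra Algebra.TensorProduct

variable {R A Q : Type*} [CommRing R] [CommRing A] [Algebra R A] [CommMonoid Q]
  [Algebra R ℤ[Q]]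

theorem surjective_mk_spanNeOne_comp_includeLeft :
    Function.Surjective ((Ideal.Quotient.mk (Ideal.spanNeOne fun q : Q ↦
      (1 : A) ⊗ₜ[R] single q (1 : ℤ))).comp includeLeftRingHom) := by
  set I' := Ideal.spanNeOne fun q : Q ↦ (1 : A) ⊗ₜ[R] single q (1 : ℤ)
  set F := (Ideal.Quotient.mk I').comp (includeLeftRingHom : A →+* A ⊗[R] ℤ[Q])
  have hleft : ∀ a : A, Ideal.Quotient.mk I' (a ⊗ₜ 1) ∈ F.range := fun a ↦ ⟨a, rfl⟩
  have hsingle : ∀ q : Q, Ideal.Quotient.mk I' (1 ⊗ₜ single q 1) ∈ F.range := fun q ↦ by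
    by_cases hq : q = 1
    · subst hq
      exact ⟨1, by rw [map_one, ← MonoidAlgebra.one_def, ← Algebra.TensorProduct.one_def, map_one]⟩
    · refine ⟨0, ?_⟩
      rw [map_zero, eq_comm, Ideal.Quotient.eq_zero_iff_mem]
      exact Ideal.apply_mem_spanNeOne _ hq
  have hmem : ∀ t, Ideal.Quotient.mk I' t ∈ F.range := fun t ↦ by
    induction t using TensorProduct.induction_on with
    | zero => exact ⟨0, by simp⟩
    | add x y hx hy => rw [map_add]; exact add_mem hx hy
    | tmul a y =>
      induction y using MonoidAlgebra.induction_linear with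
      | zero => exact ⟨0, by simp⟩
      | add y z hy hz => rw [tmul_add, map_add]; exact add_mem hy hz
      | single q n =>
        have hsplit : a ⊗ₜ[R] single q n = n • ((a ⊗ₜ 1) * (1 ⊗ₜ single q 1)) := by
          rw [tmul_mul_tmul, mul_one, one_mul, ← tmul_smul, smul_single', mul_one]
        rw [hsplit, map_zsmul, map_mul]
        exact zsmul_mem (mul_mem (hleft a) (hsingle q)) n
  intro z
  obtain ⟨t, rfl⟩ := Ideal.Quotient.mk_surjective z
  exact hmem t

end TensorProduct

section BaseChange

open MonoidAlgebra

variable {P Q A : Type} [CommMonoid P] [CommMonoid Q] [CommRing A] {h : P →* Q} {φ : P →* A}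
  [Algebra ℤ[P] A] [Algebra ℤ[P] ℤ[Q]]
  (hA : ∀ p : P, algebraMap ℤ[P] A (single p 1) = φ p)
  (hPQ : ∀ p : P, algebraMap ℤ[P] ℤ[Q] (single p 1) = single (h p) 1)
include hPQ

noncomputable def liftOfCompatible {B : Type} [CommRing B] [Algebra ℤ[P] B] (e : Q →* B)
    (he : ∀ p, e (h p) = algebraMap ℤ[P] B (single p 1)) : ℤ[Q] →ₐ[ℤ[P]] B where
  __ := MonoidAlgebra.lift ℤ B Q e
  commutes' r := by
    have hcomp : (MonoidAlgebra.lift ℤ B Q e : ℤ[Q] →+* B).comp (algebraMap ℤ[P] ℤ[Q]) =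
        algebraMap ℤ[P] B := by
      refine MonoidAlgebra.ringHom_ext (fun n ↦ ?_) (fun p ↦ ?_)
      · rw [← Int.cast_id (n := n), ← MonoidAlgebra.intCast_def, map_intCast, map_intCast]
      · rw [RingHom.comp_apply, hPQ, RingHom.coe_coe, lift_single, one_smul, he]
    exact congr($hcomp r)

include hA in
theorem apply_tmul_one_eq_one_tmul_single (p : P) :
    (φ p ⊗ₜ[ℤ[P]] (1 : ℤ[Q])) = (1 : A) ⊗ₜ single (h p) 1 := by
  rw [← hA, ← hPQ, Algebra.algebraMap_eq_smul_one, smul_tmul, Algebra.algebraMap_eq_smul_one]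

include hA in
theorem spanNeOne_le_ker (hinj : Function.Injective h) :
    Ideal.spanNeOne φ ≤ RingHom.ker ((Ideal.Quotient.mk (Ideal.spanNeOne fun q : Q ↦
      (1 : A) ⊗ₜ[ℤ[P]] single q (1 : ℤ))).comp Algebra.TensorProduct.includeLeftRingHom) := by
  refine Ideal.span_le.2 ?_
  rintro _ ⟨p, hp, rfl⟩
  rw [SetLike.mem_coe, RingHom.mem_ker, RingHom.comp_apply, Ideal.Quotient.eq_zero_iff_mem]
  change φ p ⊗ₜ 1 ∈ _
  rw [apply_tmul_one_eq_one_tmul_single hA hPQ]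
  exact Ideal.apply_mem_spanNeOne _ ((map_ne_one_iff h hinj).2 hp)

include hA in
theorem ker_le_spanNeOne [Subsingleton Qˣ] (hinj : Function.Injective h) :
    RingHom.ker ((Ideal.Quotient.mk (Ideal.spanNeOne fun q : Q ↦
      (1 : A) ⊗ₜ[ℤ[P]] single q (1 : ℤ))).comp Algebra.TensorProduct.includeLeftRingHom) ≤
      Ideal.spanNeOne φ := by
  classical
  set I := Ideal.spanNeOne φ
  let e : Q →* A ⧸ I := MonoidHom.indicatorOne Q (A ⧸ I)
  have he : ∀ p, e (h p) = algebraMap ℤ[P] (A ⧸ I) (single p 1) := fun p ↦ by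
    rw [← Ideal.Quotient.mk_algebraMap, hA]
    by_cases hp : p = 1
    · simp [hp, e, MonoidHom.indicatorOne]
    · rw [Ideal.Quotient.eq_zero_iff_mem.2 (Ideal.apply_mem_spanNeOne φ hp)]
      simp [e, MonoidHom.indicatorOne, (map_ne_one_iff h hinj).2 hp]
  let ψ := Algebra.TensorProduct.productMap (Ideal.Quotient.mkₐ ℤ[P] I) (liftOfCompatible hPQ e he)
  have hI' : Ideal.spanNeOne (fun q : Q ↦ (1 : A) ⊗ₜ[ℤ[P]] single q (1 : ℤ)) ≤ RingHom.ker ψ := by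
    refine Ideal.span_le.2 ?_
    rintro _ ⟨q, hq : q ≠ 1, rfl⟩
    simp [ψ, liftOfCompatible, e, MonoidHom.indicatorOne, hq]
  intro a ha
  rw [RingHom.mem_ker, RingHom.comp_apply, Ideal.Quotient.eq_zero_iff_mem] at ha
  simpa [ψ, Ideal.Quotient.eq_zero_iff_mem] using hI' ha

end BaseChange

theorem stmt_12_general (P Q G' : Type) [CommMonoid P] [CommMonoid Q] [CommGroup G']
    (ιQ : Q →* G')
    (hQ : IsFsVia ιQ)
    (h : P →* Q) (hK : IsKummer h)
    (hQtf : ∀ x : G', ∀ n : ℕ, 1 ≤ n → x ^ n = 1 → x = 1)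
    (A : Type) [CommRing A] (φ : P →* A)
    [Algebra (MonoidAlgebra ℤ P) A]
    (hA : ∀ p : P, algebraMap (MonoidAlgebra ℤ P) A (MonoidAlgebra.single p 1) = φ p)
    [Algebra (MonoidAlgebra ℤ P) (MonoidAlgebra ℤ Q)]
    (hPQ : ∀ p : P, algebraMap (MonoidAlgebra ℤ P) (MonoidAlgebra ℤ Q)
      (MonoidAlgebra.single p 1) = MonoidAlgebra.single (h p) 1) :
    ∀ (I : Ideal A) (I' : Ideal (A ⊗[MonoidAlgebra ℤ P] MonoidAlgebra ℤ Q)),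
      I = Ideal.span (φ '' {p : P | p ≠ 1}) →
      I' = Ideal.span ((fun q : Q =>
        ((1 : A) ⊗ₜ MonoidAlgebra.single q (1 : ℤ) :
          A ⊗[MonoidAlgebra ℤ P] MonoidAlgebra ℤ Q)) '' {q : Q | q ≠ 1}) →
      Function.Surjective
        ((Ideal.Quotient.mk I').comp
          (Algebra.TensorProduct.includeLeftRingHom :
            A →+* A ⊗[MonoidAlgebra ℤ P] MonoidAlgebra ℤ Q)) ∧
      RingHom.ker
        ((Ideal.Quotient.mk I').comp
          (Algebra.TensorProduct.includeLeftRingHom :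
            A →+* A ⊗[MonoidAlgebra ℤ P] MonoidAlgebra ℤ Q)) = I := by
  rintro I I' rfl rfl
  refine ⟨surjective_mk_spanNeOne_comp_includeLeft,
    le_antisymm ?_ (spanNeOne_le_ker hA hPQ hK.1)⟩
  by_cases h1 : (1 : A) ∈ Ideal.spanNeOne φ
  · exact le_top.trans_eq ((Ideal.eq_top_iff_one _).2 h1).symm
  have := Ideal.subsingleton_units_of_one_notMem_spanNeOne φ h1
  have hQtorsionFree : ∀ q : Q, ∀ n : ℕ, 1 ≤ n → q ^ n = 1 → q = 1 := fun q n hn hq ↦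
    hQ.2.1 <| by rw [map_one]; exact hQtf _ n hn (by rw [← map_pow, hq, map_one])
  have := hK.subsingleton_units hQtorsionFree
  exact ker_le_spanNeOne hA hPQ hK.1

/-- Let `A` be a local ring, `P` an fs monoid with `P → (A, ·)`, `P → Q` an injective
Kummer-type homomorphism of fs monoids with `Q` torsion free (its group hull `Q^gp` is torsion
free).  Let `I ⊆ A` be the ideal generated by the image of `P \ {1}` and
`I' ⊆ A' = A ⊗_{Z[P]} Z[Q]` the ideal generated by the image of `Q \ {1}`.  Then the natural
map `A/I → A'/I'` is an isomorphism; equivalently, the composite `A → A' → A'/I'` is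
surjective with kernel exactly `I`. -/
theorem stmt_12 (P Q G G' : Type) [CommMonoid P] [CommMonoid Q] [CommGroup G] [CommGroup G']
    (ιP : P →* G) (ιQ : Q →* G') (hgpP : IsGp ιP) (hgpQ : IsGp ιQ)
    (hP : IsFsVia ιP) (hQ : IsFsVia ιQ)
    (h : P →* Q) (hK : IsKummer h)
    (hQtf : ∀ x : G', ∀ n : ℕ, 1 ≤ n → x ^ n = 1 → x = 1)
    (A : Type) [CommRing A] [IsLocalRing A] (φ : P →* A)
    [Algebra (MonoidAlgebra ℤ P) A]
    (hA : ∀ p : P, algebraMap (MonoidAlgebra ℤ P) A (MonoidAlgebra.single p 1) = φ p)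
    [Algebra (MonoidAlgebra ℤ P) (MonoidAlgebra ℤ Q)]
    (hPQ : ∀ p : P, algebraMap (MonoidAlgebra ℤ P) (MonoidAlgebra ℤ Q)
      (MonoidAlgebra.single p 1) = MonoidAlgebra.single (h p) 1) :
    ∀ (I : Ideal A) (I' : Ideal (A ⊗[MonoidAlgebra ℤ P] MonoidAlgebra ℤ Q)),
      I = Ideal.span (φ '' {p : P | p ≠ 1}) →
      I' = Ideal.span ((fun q : Q =>
        ((1 : A) ⊗ₜ MonoidAlgebra.single q (1 : ℤ) :
          A ⊗[MonoidAlgebra ℤ P] MonoidAlgebra ℤ Q)) '' {q : Q | q ≠ 1}) →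
      Function.Surjective
        ((Ideal.Quotient.mk I').comp
          (Algebra.TensorProduct.includeLeftRingHom :
            A →+* A ⊗[MonoidAlgebra ℤ P] MonoidAlgebra ℤ Q)) ∧
      RingHom.ker
        ((Ideal.Quotient.mk I').comp
          (Algebra.TensorProduct.includeLeftRingHom :
            A →+* A ⊗[MonoidAlgebra ℤ P] MonoidAlgebra ℤ Q)) = I :=
  stmt_12_general P Q G' ιQ hQ h hK hQtf A φ hA hPQ
end
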